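/- arXiv:1006.1415 — 3 statements merged into one kernel-verified Lean document; each statement's English description precedes it below -/
import Mathlib

section
/- For every deterministic parity pushdown automaton A there is a deterministic stair parity pushdown automaton A' recognizing the same ω-language, L(A)=L(A'); consequently DCFL_ω ⊆ StDCFL_ω. -/
/-!  Common definitions: pushdown machines, ω-pushdown automata, pushdown games,
pushdown strategies (deterministic pushdown automata with output), and
alternating two-way / nondeterministic one-way parity tree automata. -/

/-- Kinds of letters in a visibly pushdown alphabet. -/
inductive VKind : Type
  | call | ret | intern

/-- A pushdown machine over states `Q`, input alphabet `A` and stack alphabet `Γ`.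
The initial stack symbol `⊥` is implicit: a stack content `γ⊥ ∈ Γ*⊥` is modeled by
the list `γ` of symbols above `⊥`, and the top-of-stack argument `none` of the
transition function represents `⊥` (i.e. the empty list).  A transition replaces the
topmost symbol by the returned word (respectively pushes the returned word on top of
`⊥`), so `⊥` can neither be pushed onto nor removed from the stack.  The input
letter `none` is `ε`. -/
structure PDM (Q A Γ : Type) where
  δ : Q → Option A → Option Γ → Set (Q × List Γ)
  qin : Q

namespace PDM

variable {Q A Γ : Type}

/-- A configuration: a state together with the stack content (above `⊥`). -/
abbrev Conf (Q Γ : Type) : Type := Q × List Γ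

/-- Stack height of a configuration `(q,γ⊥)`: the length `|γ⊥|` (the `⊥` counts). -/
def sh (c : Conf Q Γ) : ℕ := c.2.length + 1

/-- One transition step of the machine, labeled by `none` (an `ε`-move) or `some a`. -/
def Step (M : PDM Q A Γ) (c : Conf Q Γ) (a : Option A) (c' : Conf Q Γ) : Prop :=
  match c.2 with
  | [] => c' ∈ M.δ c.1 a none
  | t :: rest => ∃ γ' : List Γ, (c'.1, γ') ∈ M.δ c.1 a (some t) ∧ c'.2 = γ' ++ rest

/-- Determinism: `|δ(q,a,A)| + |δ(q,ε,A)| ≤ 1` for all `q ∈ Q`, `a ∈ A`, `A ∈ Γ⊥`. -/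
def Deterministic (M : PDM Q A Γ) : Prop :=
  ∀ (q : Q) (t : Option Γ),
    (∀ a : Option A, (M.δ q a t).Subsingleton) ∧
    (∀ a : A, (M.δ q (some a) t).Nonempty → M.δ q none t = ∅)

/-- A realtime machine has no `ε`-transitions. -/
def Realtime (M : PDM Q A Γ) : Prop := ∀ q t, M.δ q none t = ∅

/-- Normal form: every transition is a push of exactly one symbol (`δ(q,a,A)=(q',A'A)`),
a skip (`δ(q,a,A)=(q',A)`), or a pop (`δ(q,a,A)=(q',ε)`). -/
def NormalForm (M : PDM Q A Γ) : Prop :=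
  ∀ q a t p, p ∈ M.δ q a t →
    p.2 = ([] : List Γ) ∨ p.2 = t.toList ∨ ∃ B : Γ, p.2 = B :: t.toList

/-- A blind one-counter machine: every transition enabled with empty stack (counter `0`)
is also enabled, with the same state change and counter effect, with nonempty stack:
`δ(q,a,⊥) ∋ (q',Aⁿ⊥)` implies `δ(q,a,A) ∋ (q',AⁿA)`. -/
def Blind (M : PDM Q A Unit) : Prop :=
  ∀ (q : Q) (a : Option A) (p : Q × List Unit),
    p ∈ M.δ q a none → (p.1, p.2 ++ [()]) ∈ M.δ q a (some ())

/-- A visibly pushdown machine w.r.t. the partition `kind` of the input alphabet into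
calls, returns and internal actions: no `ε`-transitions; on a call exactly one symbol is
pushed and the transition does not depend on the top of the stack; on a return the top
symbol is popped (`⊥` is left unchanged); on an internal action the stack is unchanged
and the transition does not depend on the top of the stack. -/
def Visibly (M : PDM Q A Γ) (kind : A → VKind) : Prop :=
  (∀ q t, M.δ q none t = ∅) ∧
  (∀ q a, kind a = VKind.call → ∃ mv : Set (Q × Γ),
      ∀ t, M.δ q (some a) t = (fun p : Q × Γ => (p.1, p.2 :: t.toList)) '' mv) ∧
  (∀ q a t, kind a = VKind.ret → ∀ p ∈ M.δ q (some a) t, p.2 = ([] : List Γ)) ∧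
  (∀ q a, kind a = VKind.intern → ∃ mv : Set Q,
      ∀ t, M.δ q (some a) t = (fun q' : Q => (q', t.toList)) '' mv)

/-- `ρ` is an infinite run of `M` on the ω-word `α`: it starts in the initial
configuration `(q_in,⊥)`, each step follows `δ` on a letter or on `ε`, and the
consumed letters (the non-`ε` labels, in order) form exactly `α`. -/
def IsRunOn (M : PDM Q A Γ) (ρ : ℕ → Conf Q Γ) (α : ℕ → A) : Prop :=
  ρ 0 = (M.qin, []) ∧
  ∃ u : ℕ → Option A,
    (∀ n : ℕ, M.Step (ρ n) (u n) (ρ (n + 1))) ∧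
    ∃ φ : ℕ → ℕ, StrictMono φ ∧ (∀ k : ℕ, u (φ k) = some (α k)) ∧
      ∀ n : ℕ, (u n).isSome = true → ∃ k : ℕ, φ k = n

/-- `Inf(ρ)`: states occurring infinitely often in `ρ`. -/
def InfOcc (ρ : ℕ → Conf Q Γ) : Set Q := {q | ∀ n : ℕ, ∃ m, n ≤ m ∧ (ρ m).1 = q}

/-- `Steps_ρ = {n | ∀ m ≥ n, sh(ρ(m)) ≥ sh(ρ(n))}`. -/
def StepsSet (ρ : ℕ → Conf Q Γ) : Set ℕ := {n | ∀ m : ℕ, n ≤ m → sh (ρ n) ≤ sh (ρ m)}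

/-- States occurring infinitely often in the subsequence `ρ|_{Steps_ρ}`. -/
def InfOccStair (ρ : ℕ → Conf Q Γ) : Set Q :=
  {q | ∀ n : ℕ, ∃ m, n ≤ m ∧ m ∈ StepsSet ρ ∧ (ρ m).1 = q}

/-- Parity condition: the minimal priority seen infinitely often is even. -/
def ParityAcc (col : Q → ℕ) (ρ : ℕ → Conf Q Γ) : Prop :=
  Even (sInf (col '' InfOcc ρ))

/-- Stair parity condition: the minimal priority seen infinitely often in
`ρ|_{Steps_ρ}` is even. -/
def StairParityAcc (col : Q → ℕ) (ρ : ℕ → Conf Q Γ) : Prop :=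
  Even (sInf (col '' InfOccStair ρ))

/-- The ω-language of the parity pushdown automaton `(M, col)`. -/
def ParityLang (M : PDM Q A Γ) (col : Q → ℕ) : Set (ℕ → A) :=
  {α | ∃ ρ : ℕ → Conf Q Γ, M.IsRunOn ρ α ∧ ParityAcc col ρ}

/-- The ω-language of the stair parity pushdown automaton `(M, col)`. -/
def StairParityLang (M : PDM Q A Γ) (col : Q → ℕ) : Set (ℕ → A) :=
  {α | ∃ ρ : ℕ → Conf Q Γ, M.IsRunOn ρ α ∧ StairParityAcc col ρ}

/-- Acceptance of a finite word by the pushdown automaton `(M, F)`: some finite run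
from the initial configuration consuming exactly `w` ends in a final state. -/
def AcceptsFin (M : PDM Q A Γ) (F : Set Q) (w : List A) : Prop :=
  ∃ (m : ℕ) (ρ : ℕ → Conf Q Γ) (u : ℕ → Option A),
    ρ 0 = (M.qin, []) ∧ (∀ k < m, M.Step (ρ k) (u k) (ρ (k + 1))) ∧
    (List.ofFn (fun k : Fin m => u k.1)).reduceOption = w ∧ (ρ m).1 ∈ F

/-- An infinite play of the pushdown game: a sequence of configurations starting in the
initial configuration, together with the labels of the chosen transitions. -/
def IsPlay (M : PDM Q A Γ) (conf : ℕ → Conf Q Γ) (lab : ℕ → Option A) : Prop :=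
  conf 0 = (M.qin, []) ∧ ∀ n : ℕ, M.Step (conf n) (lab n) (conf (n + 1))

/-- Player `i` has a winning strategy (as an abstract function from histories of moves
to moves) in the pushdown game on `M` given by the partition `owner` of the states,
where Player 0 wins an infinite play `conf` iff `W conf` holds: the strategy always
proposes an enabled transition at any reachable consistent position owned by Player `i`,
and every infinite play consistent with it is won by Player `i`. -/
def HasAbstractWinning (M : PDM Q A Γ) (owner : Q → Fin 2)
    (W : (ℕ → Conf Q Γ) → Prop) (i : Fin 2) : Prop :=
  ∃ σ : List (Option A) → Option A,
    (∀ (n : ℕ) (conf : ℕ → Conf Q Γ) (lab : ℕ → Option A),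
      conf 0 = (M.qin, []) →
      (∀ k < n, M.Step (conf k) (lab k) (conf (k + 1))) →
      (∀ k < n, owner (conf k).1 = i → lab k = σ (List.ofFn (fun j : Fin k => lab j.1))) →
      owner (conf n).1 = i →
      ∃ c' : Conf Q Γ, M.Step (conf n) (σ (List.ofFn (fun j : Fin n => lab j.1))) c') ∧
    (∀ (conf : ℕ → Conf Q Γ) (lab : ℕ → Option A),
      IsPlay M conf lab →
      (∀ n : ℕ, owner (conf n).1 = i → lab n = σ (List.ofFn (fun j : Fin n => lab j.1))) →
      (W conf ↔ i = 0))

/-- The pushdown game on `M` with partition `owner` and winning condition `W`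
(for Player 0) is determined. -/
def Determined (M : PDM Q A Γ) (owner : Q → Fin 2)
    (W : (ℕ → Conf Q Γ) → Prop) : Prop :=
  ∃ i : Fin 2, HasAbstractWinning M owner W i

end PDM

/-- A deterministic pushdown automaton with output (a pushdown strategy): it reads the
opponent's moves and outputs the player's own next choices.  `δ s inp t = some (s', γ', out)`
means: in state `s` with top of stack `t` (`none` = `⊥`), on input `inp` (`none` = `ε`)
the machine moves to state `s'`, replaces the top of the stack by `γ'` and outputs `out`
(`none` = `ε`-output).  Partiality of `δ` gives determinism per input letter. -/
structure StratPDA (A Γ' : Type) where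
  S : Type
  sin : S
  δ : S → Option A → Option Γ' → Option (S × List Γ' × Option A)

namespace StratPDA

variable {Q A Γ Γ' : Type}

/-- Determinism: if an `ε`-input transition is present then no letter transition is. -/
def Det (T : StratPDA A Γ') : Prop :=
  ∀ (s : T.S) (t : Option Γ'),
    (T.δ s none t).isSome = true → ∀ a : A, T.δ s (some a) t = none

/-- One step of the strategy transducer (same stack convention as for `PDM`). -/
def TStep (T : StratPDA A Γ') (c : T.S × List Γ') (inp out : Option A)
    (c' : T.S × List Γ') : Prop :=
  match c.2 with
  | [] => T.δ c.1 inp none = some (c'.1, c'.2, out)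
  | t :: rest => ∃ γ' : List Γ',
      T.δ c.1 inp (some t) = some (c'.1, γ', out) ∧ c'.2 = γ' ++ rest

/-- A blind one-counter strategy transducer: every transition enabled with counter `0`
is also enabled, with the same effect, with nonzero counter. -/
def Blind (T : StratPDA A Unit) : Prop :=
  ∀ (s : T.S) (inp : Option A) (r : T.S × List Unit × Option A),
    T.δ s inp none = some r → T.δ s inp (some ()) = some (r.1, r.2.1 ++ [()], r.2.2)

/-- A realtime strategy transducer: no transition both reads `ε` and outputs `ε`
(every transition carries a letter, either read or written). -/
def Realtime (T : StratPDA A Γ') : Prop :=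
  ∀ (s : T.S) (t : Option Γ') (r : T.S × List Γ' × Option A),
    T.δ s none t = some r → r.2.2 ≠ none

/-- Stack discipline of a visibly pushdown machine for the letter `a`. -/
def VStk (kind : A → VKind) (a : A) (t : Option Γ') (γ' : List Γ') : Prop :=
  match kind a with
  | VKind.call => ∃ B : Γ', γ' = B :: t.toList
  | VKind.ret => γ' = ([] : List Γ')
  | VKind.intern => γ' = t.toList

/-- A visibly pushdown strategy transducer: every transition carries exactly one letter
(the letter read on input transitions, the letter written on output transitions) and the
stack is used according to the kind of that letter. -/
def Visibly (T : StratPDA A Γ') (kind : A → VKind) : Prop :=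
  (∀ (s : T.S) (a : A) (t : Option Γ') (s' : T.S) (γ' : List Γ') (out : Option A),
      T.δ s (some a) t = some (s', γ', out) → out = none ∧ VStk kind a t γ') ∧
  (∀ (s : T.S) (t : Option Γ') (s' : T.S) (γ' : List Γ') (out : Option A),
      T.δ s none t = some (s', γ', out) → ∃ a : A, out = some a ∧ VStk kind a t γ')

/-- The strategy transducer `T`, playing for Player `i`, is consistent with the play
`(conf, lab)` of the pushdown game on `M`: `T` runs in lockstep with the play, reading
the opponent's moves and outputting Player `i`'s moves. -/
def Consistent (T : StratPDA A Γ') (M : PDM Q A Γ) (owner : Q → Fin 2) (i : Fin 2)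
    (conf : ℕ → PDM.Conf Q Γ) (lab : ℕ → Option A)
    (τ : ℕ → T.S × List Γ') : Prop :=
  τ 0 = (T.sin, []) ∧
  ∀ n : ℕ, T.TStep (τ n) (if owner (conf n).1 = i then none else lab n)
      (if owner (conf n).1 = i then lab n else none) (τ (n + 1))

/-- `T` realizes a winning strategy for Player `i` in the pushdown game on `M` with
partition `owner`, where Player 0 wins an infinite play `conf` iff `W conf` holds:
`T` is deterministic; along every finite `T`-consistent play prefix `T` proposes an
enabled move at positions of Player `i` and can process every enabled move of the
opponent; and every infinite play consistent with `T` is won by Player `i`. -/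
def IsWinningStrat (T : StratPDA A Γ') (M : PDM Q A Γ) (owner : Q → Fin 2)
    (W : (ℕ → PDM.Conf Q Γ) → Prop) (i : Fin 2) : Prop :=
  T.Det ∧
  (∀ (n : ℕ) (conf : ℕ → PDM.Conf Q Γ) (lab : ℕ → Option A) (τ : ℕ → T.S × List Γ'),
    conf 0 = (M.qin, []) → τ 0 = (T.sin, []) →
    (∀ k < n, M.Step (conf k) (lab k) (conf (k + 1))) →
    (∀ k < n, T.TStep (τ k) (if owner (conf k).1 = i then none else lab k)
        (if owner (conf k).1 = i then lab k else none) (τ (k + 1))) →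
    ((owner (conf n).1 = i →
        ∃ (x : Option A) (c' : PDM.Conf Q Γ) (τ' : T.S × List Γ'),
          M.Step (conf n) x c' ∧ T.TStep (τ n) none x τ') ∧
     (owner (conf n).1 ≠ i →
        ∀ (x : Option A) (c' : PDM.Conf Q Γ), M.Step (conf n) x c' →
          ∃ τ' : T.S × List Γ', T.TStep (τ n) x none τ'))) ∧
  (∀ (conf : ℕ → PDM.Conf Q Γ) (lab : ℕ → Option A) (τ : ℕ → T.S × List Γ'),
    PDM.IsPlay M conf lab → T.Consistent M owner i conf lab τ → (W conf ↔ i = 0))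

end StratPDA

/-! Tree automata. -/

/-- Positive Boolean formulas over `X` (with `true` and `false`). -/
inductive PosBool (X : Type) : Type
  | tru | fls
  | var (x : X)
  | and (f g : PosBool X)
  | or (f g : PosBool X)

/-- Satisfaction of a positive Boolean formula by a set of variables. -/
def PosBool.Sat {X : Type} : PosBool X → Set X → Prop
  | .tru, _ => True
  | .fls, _ => False
  | .var x, Y => x ∈ Y
  | .and f g, Y => f.Sat Y ∧ g.Sat Y
  | .or f g, Y => f.Sat Y ∨ g.Sat Y

/-- Navigation directions in a `Γ`-tree: up (to the parent), stay, or down to child `A`.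
Nodes of the full `Γ`-tree are lists over `Γ` with the last chosen direction at the head,
so the child `γ.↓_A` is `A :: γ` and the parent of `A :: γ` is `γ`. -/
inductive TMove (Γ : Type) : Type
  | up | stay
  | down (A : Γ)

def TMove.apply {Γ : Type} : TMove Γ → List Γ → Option (List Γ)
  | .up, [] => none
  | .up, _ :: l => some l
  | .stay, l => some l
  | .down A, l => some (A :: l)

/-- An alternating two-way parity tree automaton over `Sig`-labeled full `Γ`-trees. -/
structure A2TA (Sig Γ : Type) where
  Q : Type
  qin : Q
  δ : Q → Sig → PosBool (TMove Γ × Q)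
  col : Q → ℕ

/-- A run of the A2TA `B` on the `Sig`-labeled full `Γ`-tree `lab`: a tree (over some
branching type `Ξ`, children obtained by consing) whose nodes are labeled by pairs
(state, tree node), rooted at `(q_in, ε)`, such that the successors of every node
satisfy the transition formula. -/
structure A2Run {Sig Γ : Type} (B : A2TA Sig Γ) (lab : List Γ → Sig) where
  Ξ : Type
  tree : Set (List Ξ)
  rlab : List Ξ → B.Q × List Γ
  root_mem : [] ∈ tree
  root_lab : rlab [] = (B.qin, [])
  closed : ∀ (ξ : Ξ) (l : List Ξ), ξ :: l ∈ tree → l ∈ tree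
  trans : ∀ l ∈ tree, ∃ S : Set (TMove Γ × B.Q),
    PosBool.Sat (B.δ (rlab l).1 (lab (rlab l).2)) S ∧
    ∀ dq ∈ S, ∃ γ' : List Γ, TMove.apply dq.1 (rlab l).2 = some γ' ∧
      ∃ ξ : Ξ, ξ :: l ∈ tree ∧ rlab (ξ :: l) = (dq.2, γ')

/-- An infinite path of a run, starting at the root. -/
def A2Run.IsPath {Sig Γ : Type} {B : A2TA Sig Γ} {lab : List Γ → Sig}
    (r : A2Run B lab) (π : ℕ → List r.Ξ) : Prop :=
  π 0 = [] ∧ ∀ n : ℕ, (∃ ξ : r.Ξ, π (n + 1) = ξ :: π n) ∧ π (n + 1) ∈ r.tree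

/-- `B` accepts `lab`: some run is accepting, i.e. on every infinite path the minimal
priority seen infinitely often is even. -/
def A2TA.Accepts {Sig Γ : Type} (B : A2TA Sig Γ) (lab : List Γ → Sig) : Prop :=
  ∃ r : A2Run B lab, ∀ π : ℕ → List r.Ξ, r.IsPath π →
    Even (sInf (B.col '' {q | ∀ n : ℕ, ∃ m, n ≤ m ∧ (r.rlab (π m)).1 = q}))

/-- Stair acceptance for an automaton with the same components (a StA2TA): on every
infinite path the minimal priority seen infinitely often at the `Steps` positions
(positions whose stack/tree-node height is never exceeded from below later) is even. -/
def A2TA.StairAccepts {Sig Γ : Type} (B : A2TA Sig Γ) (lab : List Γ → Sig) : Prop :=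
  ∃ r : A2Run B lab, ∀ π : ℕ → List r.Ξ, r.IsPath π →
    Even (sInf (B.col '' {q | ∀ n : ℕ, ∃ m, n ≤ m ∧
      (∀ m' : ℕ, m ≤ m' → (r.rlab (π m)).2.length ≤ (r.rlab (π m')).2.length) ∧
      (r.rlab (π m)).1 = q}))

/-- A nondeterministic one-way parity tree automaton over `Sig`-labeled full `Γ`-trees. -/
structure N1TA (Sig Γ : Type) where
  Q : Type
  qin : Q
  Δ : Q → Sig → Set (Γ → Q)
  col : Q → ℕ

/-- Acceptance for N1TA: some run (one state per node, top-down) is such that along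
every branch the minimal priority seen infinitely often is even. -/
def N1TA.Accepts {Sig Γ : Type} (E : N1TA Sig Γ) (lab : List Γ → Sig) : Prop :=
  ∃ r : List Γ → E.Q, r [] = E.qin ∧
    (∀ l : List Γ, ∃ f ∈ E.Δ (r l) (lab l), ∀ A : Γ, r (A :: l) = f A) ∧
    ∀ β : ℕ → Γ, Even (sInf (E.col ''
      {q | ∀ n : ℕ, ∃ m, n ≤ m ∧ r (List.ofFn (fun j : Fin m => β j.1)).reverse = q}))


/-- `L ∈ DCFL_ω`: `L` is the ω-language of some deterministic parity pushdown automaton. -/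
def InDCFLomega {A : Type} (L : Set (ℕ → A)) : Prop :=
  ∃ (Q Γ : Type) (_ : Finite Q) (_ : Finite Γ) (M : PDM Q A Γ) (col : Q → ℕ),
    M.Deterministic ∧ PDM.ParityLang M col = L

/-- `L ∈ StDCFL_ω`: `L` is the ω-language of some deterministic stair parity pushdown
automaton. -/
def InStDCFLomega {A : Type} (L : Set (ℕ → A)) : Prop :=
  ∃ (Q Γ : Type) (_ : Finite Q) (_ : Finite Γ) (M : PDM Q A Γ) (col : Q → ℕ),
    M.Deterministic ∧ PDM.StairParityLang M col = L

/-- `L ∈ VPL_ω` (w.r.t. the visibly pushdown alphabet given by `kind`): `L` is the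
ω-language of some (nondeterministic) parity visibly pushdown automaton. -/
def InVPLomega {A : Type} (kind : A → VKind) (L : Set (ℕ → A)) : Prop :=
  ∃ (Q Γ : Type) (_ : Finite Q) (_ : Finite Γ) (M : PDM Q A Γ) (col : Q → ℕ),
    M.Visibly kind ∧ PDM.ParityLang M col = L


/-!
The stair positions of a run are the times after which the stack never drops below its
current height. Between two consecutive stair positions `p < n` the stack stays strictly above
its height at `n`, so `(p, n]` is exactly the stretch since the stack was last at most that
high. If every stair position reports the least colour seen since the previous one, the least
colour reported infinitely often at stair positions is the least colour seen infinitely often.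
A deterministic pushdown machine can compute these minima: its state carries the least colour
since the stack was last lower, and every pushed symbol records the running minimum of the
level below it, which a pop restores.
-/
open Filter Set

namespace Filter

variable {α β γ : Type*} {l : Filter α}

theorem sInf_setOf_frequently_eq {f : α → ℕ} {L : ℕ} (hfreq : ∃ᶠ x in l, f x = L)
    (hev : ∀ᶠ x in l, L ≤ f x) : sInf {y | ∃ᶠ x in l, f x = y} = L :=
  IsLeast.csInf_eq ⟨hfreq, fun _ hy => (hy.and_eventually hev).exists.elim fun _ h => h.1 ▸ h.2⟩

theorem exists_frequently_eq_eventually_le [l.NeBot] {f : α → ℕ} (hf : (range f).Finite) :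
    ∃ L, (∃ᶠ x in l, f x = L) ∧ ∀ᶠ x in l, L ≤ f x := by
  have hne : {y | ∃ᶠ x in l, f x = y}.Nonempty := by
    have hall : ∃ᶠ x in l, ∃ y ∈ range f, f x = y :=
      Frequently.of_forall fun x => ⟨f x, mem_range_self x, rfl⟩
    obtain ⟨y, -, hy⟩ := hf.frequently_exists.1 hall
    exact ⟨y, hy⟩
  refine ⟨_, Nat.sInf_mem hne, ?_⟩
  have hbelow : ∀ᶠ x in l, ∀ y ∈ range f ∩ Iio (sInf {y | ∃ᶠ x in l, f x = y}), f x ≠ y := by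
    rw [(hf.subset inter_subset_left).eventually_all]
    exact fun y hy => not_frequently.1 (Nat.notMem_of_lt_sInf hy.2)
  filter_upwards [hbelow] with x hx
  exact not_lt.1 fun h => hx (f x) ⟨mem_range_self x, h⟩ rfl

theorem image_setOf_frequently [Finite β] (φ : β → γ) (s : α → β) :
    φ '' {b | ∃ᶠ x in l, s x = b} = {c | ∃ᶠ x in l, φ (s x) = c} := by
  ext c
  constructor
  · rintro ⟨b, hb, rfl⟩
    exact hb.mono fun x hx => hx ▸ rfl
  · intro hc
    obtain ⟨b, hb⟩ := frequently_exists.1 <|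
      hc.mono (p := fun x => φ (s x) = c) (q := fun x => ∃ b, s x = b ∧ φ b = c)
        fun x hx => ⟨s x, rfl, hx⟩
    exact ⟨b, hb.mono fun _ h => h.1, (hb.exists.elim fun _ h => h.1 ▸ h.2)⟩

end Filter

/-- The least value of `f` since `len` was last below `h`; time `n` itself always counts. -/
def minSince (len f : ℕ → ℕ) (h : ℕ) : ℕ → ℕ
  | 0 => f 0
  | n + 1 => if h ≤ len n then min (minSince len f h n) (f (n + 1)) else f (n + 1)

theorem minSince_mono (len f : ℕ → ℕ) (n : ℕ) : Monotone fun h => minSince len f h n := by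
  intro h h' hh
  induction n with
  | zero => exact le_rfl
  | succ n ih =>
    dsimp only [minSince] at ih ⊢
    split_ifs <;> omega

theorem exists_isLeast_minSince (len f : ℕ → ℕ) (h n : ℕ) :
    ∃ a ≤ n, (∀ k, a ≤ k → k < n → h ≤ len k) ∧ (a = 0 ∨ len (a - 1) < h) ∧
      IsLeast (f '' Icc a n) (minSince len f h n) := by
  induction n with
  | zero => exact ⟨0, le_rfl, by omega, Or.inl rfl, by simp [minSince, isLeast_singleton]⟩
  | succ n ih =>
    by_cases hn : h ≤ len n
    · obtain ⟨a, han, habove, hdrop, hleast⟩ := ih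
      refine ⟨a, han.trans n.le_succ, fun k hak hkn => ?_, hdrop, ?_⟩
      · rcases Nat.lt_succ_iff_lt_or_eq.1 hkn with hkn | rfl
        exacts [habove k hak hkn, hn]
      · rw [minSince, if_pos hn, ← insert_Icc_right_eq_Icc_add_one (by omega), image_insert_eq,
          min_comm]
        exact hleast.insert _
    · exact ⟨n + 1, le_rfl, by omega, Or.inr (by simpa using hn),
        by simp [minSince, hn, isLeast_singleton]⟩

theorem exists_stair_ge (len : ℕ → ℕ) (m : ℕ) :
    ∃ n, m ≤ n ∧ (∀ k, n ≤ k → len n ≤ len k) ∧ ∀ k, m ≤ k → k < n → len n < len k := by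
  classical
  have hv : ∃ v, ∃ n, m ≤ n ∧ len n = v := ⟨_, m, le_rfl, rfl⟩
  have hn : ∃ n, m ≤ n ∧ len n = Nat.find hv := Nat.find_spec hv
  have hmin : ∀ k, m ≤ k → Nat.find hv ≤ len k := fun k hk => Nat.find_min' hv ⟨k, hk, rfl⟩
  obtain ⟨hmn, hlen⟩ := Nat.find_spec hn
  refine ⟨Nat.find hn, hmn, fun k hk => hlen.symm ▸ hmin k (hmn.trans hk), fun k hmk hkn => ?_⟩
  have := Nat.find_min hn hkn
  have := hmin k hmk
  omega

theorem sInf_frequently_eq_of_isLeast {f g a : ℕ → ℕ} {T : Set ℕ} (hf : (range f).Finite)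
    (hg : ∀ n ∈ T, IsLeast (f '' Icc (a n) n) (g n)) (ha : Tendsto a (atTop ⊓ 𝓟 T) atTop)
    (hcover : ∀ m, ∃ n ∈ T, m ≤ n ∧ a n ≤ m) :
    sInf {z | ∃ᶠ n in atTop ⊓ 𝓟 T, g n = z} = sInf {y | ∃ᶠ n in atTop, f n = y} := by
  obtain ⟨L, hfreq, hev⟩ := exists_frequently_eq_eventually_le (l := atTop) hf
  obtain ⟨N, hN⟩ := eventually_atTop.1 hev
  have hge : ∀ᶠ n in atTop ⊓ 𝓟 T, L ≤ g n := by
    filter_upwards [ha.eventually_ge_atTop N, mem_inf_of_right (mem_principal_self T)]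
      with n hn hT
    obtain ⟨k, hk, hgk⟩ := (hg n hT).1
    exact hgk ▸ hN k (hn.trans hk.1)
  obtain ⟨N', hN'⟩ := eventually_atTop.1 (eventually_inf_principal.1 hge)
  rw [sInf_setOf_frequently_eq hfreq hev]
  refine sInf_setOf_frequently_eq (frequently_inf_principal.2 (frequently_atTop.2 fun M => ?_)) hge
  obtain ⟨m, hm, hfm⟩ := frequently_atTop.1 hfreq (max M N')
  obtain ⟨n, hT, hmn, han⟩ := hcover m
  refine ⟨n, (le_max_left _ _).trans (hm.trans hmn), hT, le_antisymm ?_ ?_⟩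
  · exact hfm ▸ (hg n hT).2 ⟨m, ⟨han, hmn⟩, rfl⟩
  · exact hN' n ((le_max_right _ _).trans (hm.trans hmn)) hT

theorem sInf_frequently_minSince_stairs {f len : ℕ → ℕ} (hf : (range f).Finite) :
    sInf {z | ∃ᶠ n in atTop ⊓ 𝓟 {n | ∀ m, n ≤ m → len n ≤ len m},
        minSince len f (len n + 1) n = z} =
      sInf {y | ∃ᶠ n in atTop, f n = y} := by
  choose a ha_le ha_above ha_drop ha_least using
    fun n => exists_isLeast_minSince len f (len n + 1) n
  refine sInf_frequently_eq_of_isLeast hf (fun n _ => ha_least n) ?_ fun m => ?_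
  · refine tendsto_atTop.2 fun N => ?_
    obtain ⟨t, hNt, ht, -⟩ := exists_stair_ge len N
    rw [eventually_inf_principal]
    filter_upwards [eventually_gt_atTop t] with n htn _
    by_contra! hlt
    have := ha_above n t (by omega) htn
    have := ht n htn.le
    omega
  · obtain ⟨n, hmn, hn, hfirst⟩ := exists_stair_ge len m
    refine ⟨n, hn, hmn, not_lt.1 fun hlt => ?_⟩
    rcases ha_drop n with h0 | hdrop
    · omega
    · have := hfirst (a n - 1) (by omega) (by have := ha_le n; omega)
      omega

namespace PDM

variable {Q A Γ Q' Γ' : Type}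

theorem step_iff {M : PDM Q A Γ} {c c' : Conf Q Γ} {a : Option A} :
    M.Step c a c' ↔ ∃ w, (c'.1, w) ∈ M.δ c.1 a c.2.head? ∧ c'.2 = w ++ c.2.tail := by
  obtain ⟨q, _ | ⟨x, γ⟩⟩ := c <;> simp [Step]

theorem IsRunOn.map {M : PDM Q A Γ} {M' : PDM Q' A Γ'} {π : Conf Q' Γ' → Conf Q Γ}
    (hπ0 : π (M'.qin, []) = (M.qin, [])) (hπ : ∀ d a d', M'.Step d a d' → M.Step (π d) a (π d'))
    {ρ : ℕ → Conf Q' Γ'} {α : ℕ → A} (hρ : M'.IsRunOn ρ α) : M.IsRunOn (π ∘ ρ) α := by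
  obtain ⟨hρ0, u, hu, hφ⟩ := hρ
  exact ⟨by simp [hρ0, hπ0], u, fun n => hπ _ _ _ (hu n), hφ⟩

theorem IsRunOn.exists_lift {M : PDM Q A Γ} {M' : PDM Q' A Γ'} {π : Conf Q' Γ' → Conf Q Γ}
    (hπ0 : π (M'.qin, []) = (M.qin, []))
    (hlift : ∀ d a c', M.Step (π d) a c' → ∃ d', M'.Step d a d' ∧ π d' = c')
    {ρ : ℕ → Conf Q Γ} {α : ℕ → A} (hρ : M.IsRunOn ρ α) :
    ∃ ρ' : ℕ → Conf Q' Γ', M'.IsRunOn ρ' α ∧ π ∘ ρ' = ρ := by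
  obtain ⟨hρ0, u, hu, hφ⟩ := hρ
  choose! next hnext using hlift
  let ρ' : ℕ → Conf Q' Γ' := fun n => n.rec (M'.qin, []) fun k d => next d (u k) (ρ (k + 1))
  have hπρ' : ∀ n, π (ρ' n) = ρ n := by
    intro n
    induction n with
    | zero => exact hπ0.trans hρ0.symm
    | succ n ih => exact (hnext _ _ _ (ih ▸ hu n)).2
  exact ⟨ρ', ⟨rfl, u, fun n => (hnext _ _ _ ((hπρ' n).symm ▸ hu n)).1, hφ⟩, funext hπρ'⟩

variable (col : Q → ℕ)

/-- Minima of colours are represented by states attaining them, which keeps the state and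
stack alphabets of the stair machine finite. -/
def minCol (p q : Q) : Q := if col p ≤ col q then p else q

theorem col_minCol (p q : Q) : col (minCol col p q) = min (col p) (col q) := by
  unfold minCol
  split_ifs <;> omega

/-- The symbol at height `j + 1` within the word (counted from its bottom) gets `m j`. -/
def annotate (m : ℕ → Q) : List Γ → List (Γ × Q)
  | [] => []
  | x :: w => (x, m w.length) :: annotate m w

@[simp]
theorem length_annotate (m : ℕ → Q) (w : List Γ) : (annotate m w).length = w.length := by
  induction w <;> simp [annotate, *]

@[simp]
theorem map_fst_annotate (m : ℕ → Q) (w : List Γ) : (annotate m w).map Prod.fst = w := by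
  induction w <;> simp [annotate, *]

/-- For a move to `q` replacing the top `t` of a stack whose running minimum is `c`: a state of
least colour since the stack was last below height `j`, counted from just below `t`. -/
def levelMin : Option (Γ × Q) → Q → Q → ℕ → Q
  | none, c, q, 0 => minCol col c q
  | some (_, v), c, q, 0 => minCol col (minCol col v c) q
  | some _, c, q, 1 => minCol col c q
  | _, _, q, _ => q

def stairMove (c : Q) (t : Option (Γ × Q)) (p : Q × List Γ) : (Q × Q × Q) × List (Γ × Q) :=
  ((p.1, levelMin col t c p.1 p.2.length, levelMin col t c p.1 (p.2.length + 1)),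
    annotate (levelMin col t c p.1) p.2)

/-- In a state `(q, c, o)`, `q` is the state of `M`, `c` has the least colour since the stack was
last below its current height and `o` the least since it was last at most that high; a stack
symbol at height `ℓ + 1` records such a minimum for height `ℓ` as it was when written. -/
def stair (M : PDM Q A Γ) : PDM (Q × Q × Q) A (Γ × Q) where
  δ s a t := stairMove col s.2.1 t '' M.δ s.1 a (t.map Prod.fst)
  qin := (M.qin, M.qin, M.qin)

def stairCol (s : Q × Q × Q) : ℕ := col s.2.2

def unstair (d : Conf (Q × Q × Q) (Γ × Q)) : Conf Q Γ := (d.1.1, d.2.map Prod.fst)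

variable {col}

theorem Deterministic.stair {M : PDM Q A Γ} (h : M.Deterministic) :
    (M.stair col).Deterministic := fun s t =>
  ⟨fun a => ((h s.1 _).1 a).image _, fun a hne => by
    simp [PDM.stair, (h s.1 _).2 a (image_nonempty.1 hne)]⟩

theorem step_unstair {M : PDM Q A Γ} {d d' : Conf (Q × Q × Q) (Γ × Q)} {a : Option A}
    (h : (M.stair col).Step d a d') : M.Step (unstair d) a (unstair d') := by
  rw [step_iff] at h ⊢
  obtain ⟨w, ⟨⟨q', w'⟩, hp, hmove⟩, hd'⟩ := h
  simp only [stairMove, Prod.ext_iff] at hmove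
  refine ⟨w', ?_, ?_⟩
  · simpa [unstair, ← hmove.1.1, List.head?_map] using hp
  · simp [unstair, hd', ← hmove.2, List.map_tail]

theorem exists_stair_step {M : PDM Q A Γ} {d : Conf (Q × Q × Q) (Γ × Q)} {a : Option A}
    {c' : Conf Q Γ} (h : M.Step (unstair d) a c') :
    ∃ d', (M.stair col).Step d a d' ∧ unstair d' = c' := by
  rw [step_iff] at h
  obtain ⟨w, hw, hc'⟩ := h
  let d' := stairMove col d.1.2.1 d.2.head? (c'.1, w)
  refine ⟨(d'.1, d'.2 ++ d.2.tail), step_iff.2 ⟨d'.2, ⟨(c'.1, w), ?_, rfl⟩, rfl⟩, ?_⟩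
  · simpa [unstair, List.head?_map] using hw
  · simp only [unstair] at hc'
    simp [d', unstair, stairMove, ← hc']

variable (col)

/-- `C ℓ` stands for the least colour since the stack was last below height `ℓ`. -/
def AnnotationsMatch (C : ℕ → ℕ) : List (Γ × Q) → Prop
  | [] => True
  | (_, v) :: γ => min (col v) (C (γ.length + 1)) = C γ.length ∧ AnnotationsMatch C γ

def StairInv (C : ℕ → ℕ) (d : Conf (Q × Q × Q) (Γ × Q)) : Prop :=
  col d.1.2.1 = C d.2.length ∧ col d.1.2.2 = C (d.2.length + 1) ∧ AnnotationsMatch col C d.2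

variable {col}

theorem AnnotationsMatch.min_const {C C' : ℕ → ℕ} {x : ℕ} {γ : List (Γ × Q)}
    (h : AnnotationsMatch col C γ) (hC' : ∀ ℓ ≤ γ.length, C' ℓ = min (C ℓ) x) :
    AnnotationsMatch col C' γ := by
  induction γ with
  | nil => trivial
  | cons e γ ih =>
    obtain ⟨hv, hγ⟩ := h
    simp only [List.length_cons] at hC'
    refine ⟨?_, ih hγ fun ℓ hℓ => hC' ℓ (by omega)⟩
    rw [hC' _ le_rfl, hC' _ (by omega), ← hv]
    omega

theorem AnnotationsMatch.annotate_append {C : ℕ → ℕ} (hC : Monotone C) {m : ℕ → Q}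
    {γ : List (Γ × Q)} (hm : ∀ j, col (m j) = C (γ.length + j))
    (h : AnnotationsMatch col C γ) (w : List Γ) : AnnotationsMatch col C (annotate m w ++ γ) := by
  induction w with
  | nil => exact h
  | cons x w ih =>
    refine ⟨?_, ih⟩
    simp only [List.append_eq, List.length_append, length_annotate, hm, add_comm w.length]
    exact min_eq_left (hC (Nat.le_succ _))

theorem col_levelMin {C C' : ℕ → ℕ} {base : ℕ} {t : Option (Γ × Q)} {c q : Q}
    (hc : col c = C (base + t.toList.length))
    (ht : ∀ x v, t = some (x, v) → min (col v) (C (base + 1)) = C base)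
    (hC' : ∀ h, C' h = if h ≤ base + t.toList.length then min (C h) (col q) else col q) (j : ℕ) :
    col (levelMin col t c q j) = C' (base + j) := by
  rcases t with _ | ⟨x, v⟩
  · simp only [Option.toList_none, List.length_nil, add_zero] at hc hC'
    rcases j with _ | j <;> simp [levelMin, col_minCol, hC', hc]
  · simp only [Option.toList_some, List.length_singleton] at hc hC'
    rcases j with _ | _ | j <;> simp [levelMin, col_minCol, hC', hc, ← ht x v rfl, ← add_assoc]

theorem StairInv.of_stairMove {C C' : ℕ → ℕ} {s : Q × Q × Q} {t : Option (Γ × Q)}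
    {γ : List (Γ × Q)} {q : Q} {w : List Γ} (hinv : StairInv col C (s, t.toList ++ γ))
    (hC' : ∀ h, C' h = if h ≤ γ.length + t.toList.length then min (C h) (col q) else col q)
    (hmono : Monotone C') :
    StairInv col C' ((stairMove col s.2.1 t (q, w)).1, (stairMove col s.2.1 t (q, w)).2 ++ γ) := by
  obtain ⟨hc, -, hann⟩ := hinv
  have hmatch : (∀ x v, t = some (x, v) → min (col v) (C (γ.length + 1)) = C γ.length) ∧
      AnnotationsMatch col C γ := by
    rcases t with _ | ⟨x, v⟩
    · exact ⟨by simp, hann⟩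
    · exact ⟨by rintro _ _ ⟨⟩; exact hann.1, hann.2⟩
  have hm := col_levelMin (by simpa [add_comm] using hc) hmatch.1 hC'
  refine ⟨?_, ?_, ?_⟩
  · simp [stairMove, hm, add_comm]
  · simp only [stairMove, hm, List.length_append, length_annotate]
    ring_nf
  · refine (hmatch.2.min_const (x := col q) fun ℓ hℓ => ?_).annotate_append hmono hm w
    rw [hC', if_pos (by omega)]

theorem StairInv.step {M : PDM Q A Γ} {C C' : ℕ → ℕ} {d d' : Conf (Q × Q × Q) (Γ × Q)}
    {a : Option A} (hinv : StairInv col C d) (hstep : (M.stair col).Step d a d')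
    (hC' : ∀ h, C' h = if h ≤ d.2.length then min (C h) (col d'.1.1) else col d'.1.1)
    (hmono : Monotone C') : StairInv col C' d' := by
  obtain ⟨w', ⟨⟨q, w⟩, -, hmove⟩, hd'⟩ := step_iff.1 hstep
  obtain ⟨s, γ⟩ := d
  have hd : d' = ((stairMove col s.2.1 γ.head? (q, w)).1,
      (stairMove col s.2.1 γ.head? (q, w)).2 ++ γ.tail) := by
    rw [hmove]
    exact Prod.ext rfl hd'
  have hq : d'.1.1 = q := by rw [hd]; rfl
  rw [hq] at hC'
  rw [hd]
  cases γ with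
  | nil => exact StairInv.of_stairMove (t := none) hinv hC' hmono
  | cons e γ => exact StairInv.of_stairMove (t := some e) hinv (by simpa [add_comm] using hC') hmono

theorem stairInv_of_run {M : PDM Q A Γ} {ρ : ℕ → Conf (Q × Q × Q) (Γ × Q)}
    (h0 : ρ 0 = ((M.stair col).qin, []))
    (hstep : ∀ n, ∃ a, (M.stair col).Step (ρ n) a (ρ (n + 1))) (n : ℕ) :
    StairInv col (fun h => minSince (fun k => (ρ k).2.length) (fun k => col (ρ k).1.1) h n)
      (ρ n) := by
  induction n with
  | zero => simp [StairInv, minSince, h0, stair, AnnotationsMatch]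
  | succ n ih =>
    obtain ⟨a, ha⟩ := hstep n
    exact ih.step ha (fun h => rfl) (minSince_mono _ _ _)

theorem stairParityAcc_iff [Finite Q] {M : PDM Q A Γ} {ρ : ℕ → Conf (Q × Q × Q) (Γ × Q)}
    {α : ℕ → A} (hρ : (M.stair col).IsRunOn ρ α) :
    StairParityAcc (stairCol col) ρ ↔ ParityAcc col (unstair ∘ ρ) := by
  obtain ⟨h0, u, hu, -⟩ := hρ
  have hocc : InfOcc (unstair ∘ ρ) = {q | ∃ᶠ n in atTop, (ρ n).1.1 = q} := by
    ext q
    simp [InfOcc, unstair, frequently_atTop]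
  have hstairs : InfOccStair ρ = {s | ∃ᶠ n in atTop ⊓ 𝓟 {n | ∀ m, n ≤ m →
      (ρ n).2.length ≤ (ρ m).2.length}, (ρ n).1 = s} := by
    ext s
    simp [InfOccStair, StepsSet, sh, frequently_inf_principal, frequently_atTop]
  have hout : ∀ n, stairCol col (ρ n).1 = minSince (fun k => (ρ k).2.length)
      (fun k => col (ρ k).1.1) ((ρ n).2.length + 1) n :=
    fun n => (stairInv_of_run h0 (fun n => ⟨u n, hu n⟩) n).2.1
  rw [StairParityAcc, ParityAcc, hocc, hstairs, image_setOf_frequently, image_setOf_frequently]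
  simp only [hout]
  have hf : (range fun n => col (ρ n).1.1).Finite :=
    (finite_range col).subset (range_comp_subset_range (fun n => (ρ n).1.1) col)
  rw [sInf_frequently_minSince_stairs hf]

theorem stairParityLang_stair [Finite Q] (M : PDM Q A Γ) :
    StairParityLang (M.stair col) (stairCol col) = ParityLang M col := by
  have hinit : unstair ((M.stair col).qin, []) = (M.qin, ([] : List Γ)) := rfl
  ext α
  constructor
  · rintro ⟨ρ, hρ, hacc⟩
    exact ⟨unstair ∘ ρ, hρ.map hinit fun _ _ _ => step_unstair, (stairParityAcc_iff hρ).1 hacc⟩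
  · rintro ⟨ρ, hρ, hacc⟩
    obtain ⟨ρ', hρ', rfl⟩ := hρ.exists_lift hinit fun _ _ _ => exists_stair_step
    exact ⟨ρ', hρ', (stairParityAcc_iff hρ').2 hacc⟩

theorem Deterministic.exists_stairParityLang_eq [Finite Q] [Finite Γ] {M : PDM Q A Γ}
    (hM : M.Deterministic) (col : Q → ℕ) :
    ∃ (Q' Γ' : Type) (_ : Finite Q') (_ : Finite Γ') (M' : PDM Q' A Γ') (col' : Q' → ℕ),
      M'.Deterministic ∧ StairParityLang M' col' = ParityLang M col :=
  ⟨Q × Q × Q, Γ × Q, inferInstance, inferInstance, M.stair col, stairCol col, hM.stair,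
    stairParityLang_stair M⟩

end PDM

/-- For every deterministic parity pushdown automaton there is a
deterministic stair parity pushdown automaton recognizing the same ω-language;
consequently `DCFL_ω ⊆ StDCFL_ω`. -/
theorem parity_dpda_to_stair_parity_dpda :
    (∀ (Q A Γ : Type), Finite Q → Finite A → Finite Γ →
      ∀ M : PDM Q A Γ, M.Deterministic → ∀ col : Q → ℕ,
        ∃ (Q' Γ' : Type) (_ : Finite Q') (_ : Finite Γ')
          (M' : PDM Q' A Γ') (col' : Q' → ℕ),
          M'.Deterministic ∧ PDM.StairParityLang M' col' = PDM.ParityLang M col) ∧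
    (∀ (A : Type), Finite A → ∀ L : Set (ℕ → A), InDCFLomega L → InStDCFLomega L) := by
  refine ⟨fun Q A Γ _ _ _ M hM col => hM.exists_stairParityLang_eq col, ?_⟩
  rintro A - L ⟨Q, Γ, _, _, M, col, hM, rfl⟩
  exact hM.exists_stairParityLang_eq col
end

section
/- The finitary language L = {aⁿ bⁿ c | n > 0} over {a,b,c} is not accepted by any deterministic blind one-counter automaton (DB1CA). -/
/-- The alphabet `{a, b, c}`. -/
inductive ABC : Type
  | a | b | c

instance : DecidableEq ABC := fun a b => by
  cases a <;> cases b <;> first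
    | exact .isTrue rfl
    | exact .isFalse (fun h => by cases h)

namespace PDM

variable {Q A Γ : Type}

/-- Finite reachability relation consuming a word. -/
inductive Reach (M : PDM Q A Γ) : Conf Q Γ → List A → Conf Q Γ → Prop
  | refl (c : Conf Q Γ) : Reach M c [] c
  | eps {c c' c'' : Conf Q Γ} {w : List A} :
      M.Step c none c' → Reach M c' w c'' → Reach M c w c''
  | lab {c c' c'' : Conf Q Γ} {a : A} {w : List A} :
      M.Step c (some a) c' → Reach M c' w c'' → Reach M c (a :: w) c''

lemma Reach.trans {M : PDM Q A Γ} {c c' c'' : Conf Q Γ} {w v : List A}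
    (h1 : M.Reach c w c') (h2 : M.Reach c' v c'') : M.Reach c (w ++ v) c'' := by
  induction h1 with
  | refl c => simpa using h2
  | eps hs _ ih => exact Reach.eps hs (ih h2)
  | lab hs _ ih => exact Reach.lab hs (ih h2)

lemma reach_of_run {M : PDM Q A Γ} :
    ∀ (m : ℕ) (ρ : ℕ → Conf Q Γ) (u : ℕ → Option A),
      (∀ k < m, M.Step (ρ k) (u k) (ρ (k + 1))) →
      M.Reach (ρ 0) (List.ofFn (fun k : Fin m => u k.1)).reduceOption (ρ m) := by
  intro m
  induction m with
  | zero => intro ρ u _; simpa using Reach.refl (ρ 0)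
  | succ m ih =>
    intro ρ u hs
    have hrest := ih (fun n => ρ (n + 1)) (fun n => u (n + 1))
      (fun k hk => hs (k + 1) (by omega))
    have hofn : (List.ofFn (fun k : Fin (m + 1) => u k.1)) =
        u 0 :: List.ofFn (fun k : Fin m => u (k.1 + 1)) := by
      rw [List.ofFn_succ]; rfl
    rw [hofn]
    cases hu : u 0 with
    | none =>
      rw [List.reduceOption_cons_of_none]
      exact Reach.eps (hu ▸ hs 0 (by omega)) hrest
    | some a =>
      rw [List.reduceOption_cons_of_some]
      exact Reach.lab (hu ▸ hs 0 (by omega)) hrest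

lemma run_of_reach {M : PDM Q A Γ} {c c' : Conf Q Γ} {w : List A}
    (h : M.Reach c w c') :
    ∃ (m : ℕ) (ρ : ℕ → Conf Q Γ) (u : ℕ → Option A),
      ρ 0 = c ∧ (∀ k < m, M.Step (ρ k) (u k) (ρ (k + 1))) ∧
      (List.ofFn (fun k : Fin m => u k.1)).reduceOption = w ∧ ρ m = c' := by
  induction h with
  | refl c => exact ⟨0, fun _ => c, fun _ => none, rfl, by omega, by simp, rfl⟩
  | @eps c cm c'' w hstep _ ih =>
    obtain ⟨m, ρ, u, h0, hs, hred, hm⟩ := ih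
    refine ⟨m + 1, fun n => Nat.casesOn n c ρ, fun n => Nat.casesOn n none u, rfl,
      ?_, ?_, hm⟩
    · intro k hk
      cases k with
      | zero => simpa [h0] using hstep
      | succ k => exact hs k (by omega)
    · have : (List.ofFn (fun k : Fin (m + 1) =>
          (fun n => Nat.casesOn n none u : ℕ → Option A) k.1)) =
          none :: List.ofFn (fun k : Fin m => u k.1) := by
        rw [List.ofFn_succ]; rfl
      rw [this, List.reduceOption_cons_of_none, hred]
  | @lab c cm c'' a w hstep _ ih =>
    obtain ⟨m, ρ, u, h0, hs, hred, hm⟩ := ih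
    refine ⟨m + 1, fun n => Nat.casesOn n c ρ,
      fun n => Nat.casesOn n (some a) u, rfl, ?_, ?_, hm⟩
    · intro k hk
      cases k with
      | zero => simpa [h0] using hstep
      | succ k => exact hs k (by omega)
    · have : (List.ofFn (fun k : Fin (m + 1) =>
          (fun n => Nat.casesOn n (some a) u : ℕ → Option A) k.1)) =
          some a :: List.ofFn (fun k : Fin m => u k.1) := by
        rw [List.ofFn_succ]; rfl
      rw [this, List.reduceOption_cons_of_some, hred]

lemma reach_split {M : PDM Q A Γ} {c c'' : Conf Q Γ} {w : List A}
    (h : M.Reach c w c'') :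
    ∀ w1 w2 : List A, w = w1 ++ w2 →
      ∃ c' : Conf Q Γ, M.Reach c w1 c' ∧ M.Reach c' w2 c'' := by
  induction h with
  | refl c =>
    intro w1 w2 hw
    obtain ⟨h1, h2⟩ := List.append_eq_nil_iff.mp hw.symm
    exact ⟨c, h1 ▸ Reach.refl c, h2 ▸ Reach.refl c⟩
  | @eps c cm c'' w hstep hr ih =>
    intro w1 w2 hw
    obtain ⟨c', r1, r2⟩ := ih w1 w2 hw
    exact ⟨c', Reach.eps hstep r1, r2⟩
  | @lab c cm c'' a w hstep hr ih =>
    intro w1 w2 hw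
    cases w1 with
    | nil =>
      rw [List.nil_append] at hw
      exact ⟨c, Reach.refl c, hw ▸ Reach.lab hstep hr⟩
    | cons b w1' =>
      obtain ⟨rfl, hw'⟩ : a = b ∧ w = w1' ++ w2 := by
        simpa using hw
      obtain ⟨c', r1, r2⟩ := ih w1' w2 hw'
      exact ⟨c', Reach.lab hstep r1, r2⟩

lemma step_lift {M : PDM Q A Unit} (hb : M.Blind) {c c' : Conf Q Unit}
    {x : Option A} (h : M.Step c x c') (l : List Unit) :
    M.Step (c.1, c.2 ++ l) x (c'.1, c'.2 ++ l) := by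
  obtain ⟨q, γ⟩ := c
  cases γ with
  | nil =>
    cases l with
    | nil => simpa using h
    | cons t rest =>
      have hmem : c' ∈ M.δ q x none := h
      have hb' := hb q x c' hmem
      refine ⟨c'.2 ++ [()], ?_, by simp⟩
      obtain ⟨⟩ := t
      exact hb'
  | cons t rest =>
    obtain ⟨γ', hmem, heq⟩ := h
    exact ⟨γ', hmem, by simp [heq]⟩

lemma reach_lift {M : PDM Q A Unit} (hb : M.Blind) {c c' : Conf Q Unit}
    {w : List A} (h : M.Reach c w c') (l : List Unit) :
    M.Reach (c.1, c.2 ++ l) w (c'.1, c'.2 ++ l) := by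
  induction h with
  | refl c => exact Reach.refl _
  | eps hs _ ih => exact Reach.eps (step_lift hb hs l) ih
  | lab hs _ ih => exact Reach.lab (step_lift hb hs l) ih

end PDM

lemma unit_list_ext : ∀ (l l' : List Unit), l.length = l'.length → l = l'
  | [], [], _ => rfl
  | () :: t, () :: t', h => by
      rw [unit_list_ext t t' (by simpa using h)]
  | [], _ :: _, h => by simp at h
  | _ :: _, [], h => by simp at h

lemma unit_list_le {l1 l2 : List Unit} (h : l1.length ≤ l2.length) :
    ∃ l : List Unit, l2 = l1 ++ l := by
  refine ⟨List.replicate (l2.length - l1.length) (), unit_list_ext _ _ ?_⟩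
  simp [Nat.add_sub_cancel' h]

/-- The language `L = {aⁿ bⁿ c | n > 0}` is not accepted by any
deterministic blind one-counter automaton. -/
theorem anbnc_not_blind_one_counter :
    ¬ ∃ (Q : Type) (_ : Finite Q) (M : PDM Q ABC Unit) (F : Set Q),
        M.Deterministic ∧ M.Blind ∧
        {w : List ABC | PDM.AcceptsFin M F w} =
          {w : List ABC | ∃ n : ℕ, 0 < n ∧
            w = List.replicate n ABC.a ++ List.replicate n ABC.b ++ [ABC.c]} := by
  rintro ⟨Q, hQ, M, F, _hdet, hblind, hlang⟩
  have hmem : ∀ w : List ABC, PDM.AcceptsFin M F w ↔ ∃ n : ℕ, 0 < n ∧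
      w = List.replicate n ABC.a ++ List.replicate n ABC.b ++ [ABC.c] :=
    fun w => Set.ext_iff.mp hlang w
  -- For each n, get the configuration after reading a^(n+1)
  have key : ∀ n : ℕ, ∃ c : PDM.Conf Q Unit,
      M.Reach (M.qin, []) (List.replicate (n + 1) ABC.a) c ∧
      ∃ (q : Q) (γ : List Unit), q ∈ F ∧
        M.Reach c (List.replicate (n + 1) ABC.b ++ [ABC.c]) (q, γ) := by
    intro n
    have hacc : PDM.AcceptsFin M F
        (List.replicate (n + 1) ABC.a ++ List.replicate (n + 1) ABC.b ++ [ABC.c]) :=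
      (hmem _).mpr ⟨n + 1, Nat.succ_pos n, rfl⟩
    obtain ⟨m, ρ, u, h0, hs, hred, hF⟩ := hacc
    have hreach := PDM.reach_of_run m ρ u hs
    rw [hred, h0] at hreach
    obtain ⟨c, r1, r2⟩ := PDM.reach_split hreach
      (List.replicate (n + 1) ABC.a)
      (List.replicate (n + 1) ABC.b ++ [ABC.c]) (by simp)
    exact ⟨c, r1, (ρ m).1, (ρ m).2, hF, r2⟩
  choose c hc1 hc2 using key
  -- counting lemma
  have count_eq : ∀ n m : ℕ,
      PDM.AcceptsFin M F (List.replicate (m + 1) ABC.a ++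
        List.replicate (n + 1) ABC.b ++ [ABC.c]) → n = m := by
    intro n m hacc
    obtain ⟨k, hk, heq⟩ := (hmem _).mp hacc
    have ha := congrArg (List.count ABC.a) heq
    have hbcnt := congrArg (List.count ABC.b) heq
    simp [List.count_append, List.count_replicate, List.count_singleton] at ha hbcnt
    omega
  -- main step: same state after a's plus counter comparison gives equality
  have main : ∀ n m : ℕ, (c n).1 = (c m).1 →
      (c n).2.length ≤ (c m).2.length → n = m := by
    intro n m hq hlen
    obtain ⟨l, hl⟩ := unit_list_le hlen
    obtain ⟨q, γ, hqF, hr⟩ := hc2 n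
    have hlift := PDM.reach_lift hblind hr l
    rw [← hl, hq, Prod.mk.eta] at hlift
    have hwhole : M.Reach (M.qin, []) (List.replicate (m + 1) ABC.a ++
        (List.replicate (n + 1) ABC.b ++ [ABC.c])) (q, γ ++ l) := by
      have := (hc1 m).trans hlift
      simpa using this
    obtain ⟨m', ρ, u, h0, hs, hred, hm'⟩ := PDM.run_of_reach hwhole
    have hacc : PDM.AcceptsFin M F (List.replicate (m + 1) ABC.a ++
        List.replicate (n + 1) ABC.b ++ [ABC.c]) := by
      refine ⟨m', ρ, u, h0, hs, by rw [hred, List.append_assoc], ?_⟩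
      rw [hm']; exact hqF
    exact count_eq n m hacc
  obtain ⟨n, m, hnm, hq⟩ := Finite.exists_ne_map_eq_of_infinite (fun n => (c n).1)
  rcases le_total (c n).2.length (c m).2.length with h | h
  · exact hnm (main n m hq h)
  · exact hnm (main m n hq.symm h).symm
end

section
/- In the specific blind one-counter parity game G(A) given by the deterministic blind one-counter parity automaton A = ({q₀,q₁,q₂,q₃,q₄}, {a,b,c,d}, {A}, δ, q₀, ⊥, col) with Player-0 states {q₂,q₃}, Player-1 states {q₀,q₁,q₄}, transitions δ(q₀,a,X)=(q₀,AX), δ(q₀,b,A)=δ(q₁,b,A)=(q₁,ε), δ(q₁,c,X)=(q₂,X), δ(q₂,a,X)=(q₃,X), δ(q₂,b,X)=(q₄,X), δ(q₃,c,X)=(q₄,AX), δ(q₄,c,X)=(q₃,AX), δ(q₃,d,A)=(q₃,A), δ(q₄,d,A)=(q₄,A) for X∈{A,⊥}, and priorities col(q₀)=col(q₁)=2, col(q₂)=col(q₃)=0, col(q₄)=1: Player 0 has a winning strategy from the initial configuration (q₀,⊥) which is realizable by a deterministic pushdown automaton, but no deterministic blind one-counter automaton realizes a winning strategy for Player 0.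 -/
/-- The states `q₀,…,q₄` of the blind one-counter game. -/
inductive St : Type
  | q0 | q1 | q2 | q3 | q4

/-- The alphabet `{a, b, c, d}`. -/
inductive Letter : Type
  | a | b | c | d

/-- The transition function of the deterministic blind one-counter parity automaton `A`
(for `X ∈ {A,⊥}`): `δ(q₀,a,X)=(q₀,AX)`, `δ(q₀,b,A)=δ(q₁,b,A)=(q₁,ε)`, `δ(q₁,c,X)=(q₂,X)`,
`δ(q₂,a,X)=(q₃,X)`, `δ(q₂,b,X)=(q₄,X)`, `δ(q₃,c,X)=(q₄,AX)`, `δ(q₄,c,X)=(q₃,AX)`,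
`δ(q₃,d,A)=(q₃,A)`, `δ(q₄,d,A)=(q₄,A)`. -/
def gameδ : St → Option Letter → Option Unit → Set (St × List Unit)
  | St.q0, some Letter.a, t => {(St.q0, () :: t.toList)}
  | St.q0, some Letter.b, some _ => {(St.q1, [])}
  | St.q1, some Letter.b, some _ => {(St.q1, [])}
  | St.q1, some Letter.c, t => {(St.q2, t.toList)}
  | St.q2, some Letter.a, t => {(St.q3, t.toList)}
  | St.q2, some Letter.b, t => {(St.q4, t.toList)}
  | St.q3, some Letter.c, t => {(St.q4, () :: t.toList)}
  | St.q4, some Letter.c, t => {(St.q3, () :: t.toList)}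
  | St.q3, some Letter.d, some _ => {(St.q3, [()])}
  | St.q4, some Letter.d, some _ => {(St.q4, [()])}
  | _, _, _ => ∅

def gameM : PDM St Letter Unit := ⟨gameδ, St.q0⟩

/-- Player 0 owns `q₂, q₃`; Player 1 owns `q₀, q₁, q₄`. -/
def gameOwner : St → Fin 2
  | St.q2 => 0
  | St.q3 => 0
  | _ => 1

/-- `col(q₀)=col(q₁)=2`, `col(q₂)=col(q₃)=0`, `col(q₄)=1`. -/
def gameCol : St → ℕ
  | St.q0 => 2
  | St.q1 => 2
  | St.q2 => 0
  | St.q3 => 0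
  | St.q4 => 1

/-!
Player 0 wins by keeping an exact copy of the counter on her own stack: at `q₂` she plays `a`
when the counter is positive and then `d` forever in `q₃`, and `b` when it is zero, after which
Player 1 must play `c` into `q₃` with a positive counter. Either way `q₄` is visited at most once.

A blind one-counter strategy `T` cannot do this. While Player 1 plays `a`s, two of the
configurations of `T`, reached after `aᵐ⁺¹` and `aⁿ⁺¹` with `m < n`, share their state and have
stacks `γ` and `γ ++ p`. After `bᵐ⁺¹c` from the first the game is in `(q₂, ⊥)`, where `T` must
answer `b`: after `a`, `T` is forced through `c` into `q₄` with a positive counter, and Player 1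
stays there with `d` forever. Blindness lets `T` replay the same moves from the second
configuration with `p` kept at the bottom of its stack, so `T` also answers `b` in `(q₂, Aⁿ⁻ᵐ)`,
and again Player 1 stays in `q₄` forever.
-/

theorem exists_lt_eq_append_of_finite {S : Type} [Finite S] (t : ℕ → S × List Unit) :
    ∃ m n, m < n ∧ ∃ p, t n = ((t m).1, (t m).2 ++ p) := by
  obtain ⟨m, n, hmn, hs, hl⟩ := ((Finite.wellQuasiOrdered (· = ·)).prod wellQuasiOrdered_le)
    fun k => ((t k).1, (t k).2.length)
  exact ⟨m, n, hmn, List.replicate ((t n).2.length - (t m).2.length) (),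
    Prod.ext hs.symm (List.length_injective (by simp; omega))⟩

theorem exists_seq_of_forall_exists {α : Type*} {P : ℕ → α → Prop} {R : ℕ → α → α → Prop}
    {a : α} (h0 : P 0 a) (h : ∀ k x, P k x → ∃ y, R k x y ∧ P (k + 1) y) :
    ∃ u : ℕ → α, u 0 = a ∧ ∀ k, P k (u k) ∧ R k (u k) (u (k + 1)) := by
  choose! next hR hP using h
  let u : ℕ → α := fun k => Nat.rec (motive := fun _ => α) a next k
  have hu : ∀ k, P k (u k) := fun k => by
    induction k with
    | zero => exact h0
    | succ k ih => exact hP k _ ih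
  exact ⟨u, rfl, fun k => ⟨hu k, hR k _ (hu k)⟩⟩

def prefixThen {α : Type*} (f g : ℕ → α) (n k : ℕ) : α := if k < n then f k else g (k - n)

section prefixThen

variable {α : Type*} {f g : ℕ → α} {n k : ℕ}

theorem prefixThen_of_lt (h : k < n) : prefixThen f g n k = f k := if_pos h

theorem prefixThen_of_le (hfg : f n = g 0) (h : k ≤ n) : prefixThen f g n k = f k := by
  rcases h.lt_or_eq with h | rfl
  · exact prefixThen_of_lt h
  · simp [prefixThen, hfg]

theorem prefixThen_add : prefixThen f g n (n + k) = g k := by simp [prefixThen]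

theorem prefixThen_self : prefixThen f g n n = g 0 := by simp [prefixThen]

theorem prefixThen_chain {R : ℕ → α → α → Prop} (hfg : f n = g 0)
    (hf : ∀ k < n, R k (f k) (f (k + 1))) (hg : ∀ k, R (n + k) (g k) (g (k + 1))) (k : ℕ) :
    R k (prefixThen f g n k) (prefixThen f g n (k + 1)) := by
  rcases lt_or_ge k n with hk | hk
  · rw [prefixThen_of_lt hk, prefixThen_of_le hfg hk]
    exact hf k hk
  · obtain ⟨j, rfl⟩ := Nat.exists_eq_add_of_le hk
    rw [prefixThen_add, Nat.add_assoc, prefixThen_add]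
    exact hg j

end prefixThen

namespace PDM

variable {Q A Γ : Type}

theorem infOcc_nonempty [Finite Q] (ρ : ℕ → Conf Q Γ) : (InfOcc ρ).Nonempty := by
  obtain ⟨q, hq⟩ := Finite.exists_infinite_fiber fun n => (ρ n).1
  refine ⟨q, fun n => ?_⟩
  obtain ⟨m, hm, hnm⟩ := (Set.infinite_coe_iff.mp hq).exists_gt n
  exact ⟨m, hnm.le, hm⟩

theorem parityAcc_of_forall_even [Finite Q] {col : Q → ℕ} {ρ : ℕ → Conf Q Γ}
    (h : ∀ q ∈ InfOcc ρ, Even (col q)) : ParityAcc col ρ := by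
  obtain ⟨q, hq, hmin⟩ := Nat.sInf_mem ((infOcc_nonempty ρ).image col)
  unfold ParityAcc
  rw [← hmin]
  exact h q hq

theorem infOcc_eq_singleton {ρ : ℕ → Conf Q Γ} {q : Q} {n : ℕ} (h : ∀ k, (ρ (n + k)).1 = q) :
    InfOcc ρ = {q} := by
  ext q'
  refine ⟨fun hq' => ?_, fun hq' m => ⟨n + m, by omega, hq' ▸ h m⟩⟩
  obtain ⟨m, hm, rfl⟩ := hq' n
  obtain ⟨k, rfl⟩ := Nat.exists_eq_add_of_le hm
  exact h k

theorem parityAcc_iff_of_eventually_eq {col : Q → ℕ} {ρ : ℕ → Conf Q Γ} {q : Q} {n : ℕ}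
    (h : ∀ k, (ρ (n + k)).1 = q) : ParityAcc col ρ ↔ Even (col q) := by
  rw [ParityAcc, infOcc_eq_singleton h, Set.image_singleton, csInf_singleton]

end PDM

namespace StratPDA

section Reachability

variable {Q A Γ Γ' : Type} (T : StratPDA A Γ') (M : PDM Q A Γ) (owner : Q → Fin 2) (i : Fin 2)

def ConsStep (c : PDM.Conf Q Γ) (x : Option A) (t t' : T.S × List Γ') : Prop :=
  T.TStep t (if owner c.1 = i then none else x) (if owner c.1 = i then x else none) t'

def Reachable (c : PDM.Conf Q Γ) (t : T.S × List Γ') : Prop :=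
  ∃ (conf : ℕ → PDM.Conf Q Γ) (lab : ℕ → Option A) (τ : ℕ → T.S × List Γ') (n : ℕ),
    conf 0 = (M.qin, []) ∧ τ 0 = (T.sin, []) ∧
    (∀ k < n, M.Step (conf k) (lab k) (conf (k + 1))) ∧
    (∀ k < n, T.ConsStep owner i (conf k) (lab k) (τ k) (τ (k + 1))) ∧
    conf n = c ∧ τ n = t

def NonBlocking : Prop :=
  ∀ c t, T.Reachable M owner i c t →
    (owner c.1 = i → ∃ x c' t', M.Step c x c' ∧ T.TStep t none x t') ∧
    (owner c.1 ≠ i → ∀ x c', M.Step c x c' → ∃ t', T.TStep t x none t')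

variable {T M owner i}

theorem isWinningStrat_iff {W : (ℕ → PDM.Conf Q Γ) → Prop} :
    T.IsWinningStrat M owner W i ↔ T.Det ∧ T.NonBlocking M owner i ∧
      ∀ conf lab τ, M.IsPlay conf lab → T.Consistent M owner i conf lab τ → (W conf ↔ i = 0) :=
  and_congr_right fun _ => and_congr_left fun _ =>
    ⟨fun h _ _ ⟨conf, lab, τ, n, h0, hτ0, hs, hc, hn, hτn⟩ =>
        hn ▸ hτn ▸ h n conf lab τ h0 hτ0 hs hc,
      fun h n conf lab τ h0 hτ0 hs hc => h _ _ ⟨conf, lab, τ, n, h0, hτ0, hs, hc, rfl, rfl⟩⟩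

theorem consStep_of_owner_eq {c : PDM.Conf Q Γ} {x : Option A} {t t' : T.S × List Γ'}
    (h : owner c.1 = i) : T.ConsStep owner i c x t t' ↔ T.TStep t none x t' := by
  simp [ConsStep, h]

theorem consStep_of_owner_ne {c : PDM.Conf Q Γ} {x : Option A} {t t' : T.S × List Γ'}
    (h : owner c.1 ≠ i) : T.ConsStep owner i c x t t' ↔ T.TStep t x none t' := by
  simp [ConsStep, h]

theorem reachable_init : T.Reachable M owner i (M.qin, []) (T.sin, []) :=
  ⟨fun _ => (M.qin, []), fun _ => none, fun _ => (T.sin, []), 0, rfl, rfl,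
    fun _ h => absurd h (Nat.not_lt_zero _), fun _ h => absurd h (Nat.not_lt_zero _), rfl, rfl⟩

theorem Reachable.step {c c' : PDM.Conf Q Γ} {x : Option A} {t t' : T.S × List Γ'}
    (h : T.Reachable M owner i c t) (hs : M.Step c x c') (ht : T.ConsStep owner i c x t t') :
    T.Reachable M owner i c' t' := by
  obtain ⟨conf, lab, τ, n, h0, hτ0, hsteps, hcons, rfl, rfl⟩ := h
  refine ⟨prefixThen conf (fun _ => c') (n + 1), prefixThen lab (fun _ => x) n,
    prefixThen τ (fun _ => t') (n + 1), n + 1, ?_, ?_, fun k hk => ?_, fun k hk => ?_,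
    prefixThen_self, prefixThen_self⟩
  · simpa (disch := omega) only [prefixThen_of_lt] using h0
  · simpa (disch := omega) only [prefixThen_of_lt] using hτ0
  all_goals
    rcases (Nat.lt_succ_iff.mp hk).lt_or_eq with hk | rfl
    all_goals simp (disch := omega) only [prefixThen_of_lt, prefixThen_self]
  exacts [hsteps k hk, hs, hcons k hk, ht]

theorem Reachable.induction {P : PDM.Conf Q Γ → T.S × List Γ' → Prop}
    (h0 : P (M.qin, []) (T.sin, []))
    (hstep : ∀ c x c' t t', P c t → M.Step c x c' → T.ConsStep owner i c x t t' → P c' t')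
    {c : PDM.Conf Q Γ} {t : T.S × List Γ'} (h : T.Reachable M owner i c t) : P c t := by
  obtain ⟨conf, lab, τ, n, hc0, hτ0, hs, hcs, rfl, rfl⟩ := h
  induction n with
  | zero => rwa [hc0, hτ0]
  | succ n ih =>
    exact hstep _ _ _ _ _ (ih (fun k hk => hs k (by omega)) (fun k hk => hcs k (by omega)))
      (hs n n.lt_succ_self) (hcs n n.lt_succ_self)

theorem reachable_of_consistent {conf : ℕ → PDM.Conf Q Γ} {lab : ℕ → Option A}
    {τ : ℕ → T.S × List Γ'} (hplay : M.IsPlay conf lab)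
    (hcons : T.Consistent M owner i conf lab τ) (k : ℕ) :
    T.Reachable M owner i (conf k) (τ k) :=
  ⟨conf, lab, τ, k, hplay.1, hcons.1, fun j _ => hplay.2 j, fun j _ => hcons.2 j, rfl, rfl⟩

theorem Reachable.exists_consStep_of_owner_ne (hnb : T.NonBlocking M owner i)
    {c c' : PDM.Conf Q Γ} {x : Option A} {t : T.S × List Γ'} (h : T.Reachable M owner i c t)
    (hopp : owner c.1 ≠ i) (hs : M.Step c x c') :
    ∃ t', T.ConsStep owner i c x t t' ∧ T.Reachable M owner i c' t' := by
  obtain ⟨t', ht'⟩ := (hnb c t h).2 hopp x c' hs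
  have hc := (consStep_of_owner_ne hopp).2 ht'
  exact ⟨t', hc, h.step hs hc⟩

theorem Reachable.exists_consistent_play (hnb : T.NonBlocking M owner i)
    {c : PDM.Conf Q Γ} {t : T.S × List Γ'} (h : T.Reachable M owner i c t)
    {tail : ℕ → PDM.Conf Q Γ} {tlab : ℕ → Option A} (h0 : tail 0 = c)
    (hs : ∀ k, M.Step (tail k) (tlab k) (tail (k + 1))) (hopp : ∀ k, owner (tail k).1 ≠ i) :
    ∃ conf lab τ n, M.IsPlay conf lab ∧ T.Consistent M owner i conf lab τ ∧
      ∀ k, conf (n + k) = tail k := by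
  obtain ⟨u, hu0, hu⟩ : ∃ u : ℕ → T.S × List Γ', u 0 = t ∧ ∀ k, T.Reachable M owner i (tail k) (u k) ∧
      T.ConsStep owner i (tail k) (tlab k) (u k) (u (k + 1)) :=
    exists_seq_of_forall_exists (h0 ▸ h) fun k _ hk =>
      hk.exists_consStep_of_owner_ne hnb (hopp k) (hs k)
  obtain ⟨conf, lab, τ, n, hc0, hτ0, hsteps, hcons, rfl, rfl⟩ := h
  refine ⟨prefixThen conf tail n, prefixThen lab tlab n, prefixThen τ u n, n,
    ⟨?_, fun k => ?_⟩, ⟨?_, fun k => ?_⟩, fun k => prefixThen_add⟩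
  · rwa [prefixThen_of_le h0.symm n.zero_le]
  · refine prefixThen_chain (R := fun k c c' => M.Step c (prefixThen lab tlab n k) c')
      h0.symm (fun k hk => ?_) (fun k => ?_) k
    · rw [prefixThen_of_lt hk]; exact hsteps k hk
    · rw [prefixThen_add]; exact hs k
  · rwa [prefixThen_of_le hu0.symm n.zero_le]
  · refine prefixThen_chain (R := fun k t t' => T.ConsStep owner i (prefixThen conf tail n k)
      (prefixThen lab tlab n k) t t') hu0.symm (fun k hk => ?_) (fun k => ?_) k
    · rw [prefixThen_of_lt hk, prefixThen_of_lt hk]; exact hcons k hk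
    · rw [prefixThen_add, prefixThen_add]; exact (hu k).2

end Reachability

section Blind

variable {Q A Γ : Type} {T : StratPDA A Unit} {M : PDM Q A Γ} {owner : Q → Fin 2} {i : Fin 2}

theorem TStep.append_of_blind (hB : T.Blind) {t t' : T.S × List Unit} {x o : Option A}
    (h : T.TStep t x o t') (p : List Unit) : T.TStep (t.1, t.2 ++ p) x o (t'.1, t'.2 ++ p) := by
  obtain ⟨s, _ | ⟨⟨⟩, γ⟩⟩ := t
  · rcases p with _ | ⟨⟨⟩, p⟩
    · simpa using h
    · exact ⟨t'.2 ++ [()], hB s x (t'.1, t'.2, o) h, by simp⟩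
  · obtain ⟨γ', hδ, hr⟩ := h
    exact ⟨γ', hδ, by simp [hr]⟩

theorem Reachable.exists_step_append_of_blind (hB : T.Blind) (hnb : T.NonBlocking M owner i)
    {c c₂ c' c₂' : PDM.Conf Q Γ} {x : Option A} {t : T.S × List Unit} {p : List Unit}
    (h : T.Reachable M owner i c t) (h₂ : T.Reachable M owner i c₂ (t.1, t.2 ++ p))
    (hq : c₂.1 = c.1) (hopp : owner c.1 ≠ i) (hs : M.Step c x c') (hs₂ : M.Step c₂ x c₂') :
    ∃ t', T.Reachable M owner i c' t' ∧ T.Reachable M owner i c₂' (t'.1, t'.2 ++ p) := by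
  obtain ⟨t', ht'⟩ := (hnb c t h).2 hopp x c' hs
  exact ⟨t', h.step hs ((consStep_of_owner_ne hopp).2 ht'),
    h₂.step hs₂ ((consStep_of_owner_ne (hq ▸ hopp)).2 (ht'.append_of_blind hB p))⟩

end Blind

end StratPDA

open St Letter

instance : Finite St :=
  Finite.of_surjective (![q0, q1, q2, q3, q4] : Fin 5 → St) fun q => by
    cases q
    exacts [⟨0, rfl⟩, ⟨1, rfl⟩, ⟨2, rfl⟩, ⟨3, rfl⟩, ⟨4, rfl⟩]

theorem gameM_step_iff {q : St} {γ : List Unit} {x : Option Letter} {c' : PDM.Conf St Unit} :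
    gameM.Step (q, γ) x c' ↔
      (q = q0 ∧ x = some a ∧ c' = (q0, () :: γ)) ∨
      (q = q0 ∧ x = some b ∧ γ ≠ [] ∧ c' = (q1, γ.tail)) ∨
      (q = q1 ∧ x = some b ∧ γ ≠ [] ∧ c' = (q1, γ.tail)) ∨
      (q = q1 ∧ x = some c ∧ c' = (q2, γ)) ∨
      (q = q2 ∧ x = some a ∧ c' = (q3, γ)) ∨
      (q = q2 ∧ x = some b ∧ c' = (q4, γ)) ∨
      (q = q3 ∧ x = some c ∧ c' = (q4, () :: γ)) ∨
      (q = q4 ∧ x = some c ∧ c' = (q3, () :: γ)) ∨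
      (q = q3 ∧ x = some d ∧ γ ≠ [] ∧ c' = (q3, γ)) ∨
      (q = q4 ∧ x = some d ∧ γ ≠ [] ∧ c' = (q4, γ)) := by
  obtain ⟨q', γ'⟩ := c'
  cases q <;> rcases γ with _ | ⟨⟨⟩, γ⟩ <;> rcases x with _ | (_ | _ | _ | _) <;>
    simp [PDM.Step, gameM, gameδ, eq_comm]

theorem gameM_deterministic : gameM.Deterministic := by
  intro q t
  constructor
  · intro x
    cases q <;> rcases x with _ | (_|_|_|_) <;> rcases t with _ | ⟨⟩ <;>
      simp [gameM, gameδ, Set.Subsingleton]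
  · intro x _
    cases q <;> rcases t with _ | ⟨⟩ <;> simp [gameM, gameδ]

theorem gameM_blind : gameM.Blind := by
  intro q x p hp
  cases q <;> rcases x with _ | (_|_|_|_) <;>
    simp_all [gameM, gameδ]

theorem gameM_step_q0_a (γ : List Unit) : gameM.Step (q0, γ) (some a) (q0, () :: γ) :=
  gameM_step_iff.2 (by simp)

theorem gameM_step_q0_b (γ : List Unit) : gameM.Step (q0, () :: γ) (some b) (q1, γ) :=
  gameM_step_iff.2 (by simp)

theorem gameM_step_q1_b (γ : List Unit) : gameM.Step (q1, () :: γ) (some b) (q1, γ) :=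
  gameM_step_iff.2 (by simp)

theorem gameM_step_q1_c (γ : List Unit) : gameM.Step (q1, γ) (some c) (q2, γ) :=
  gameM_step_iff.2 (by simp)

theorem gameM_step_q2_b (γ : List Unit) : gameM.Step (q2, γ) (some b) (q4, γ) :=
  gameM_step_iff.2 (by simp)

theorem gameM_step_q4_d (γ : List Unit) : gameM.Step (q4, () :: γ) (some d) (q4, () :: γ) :=
  gameM_step_iff.2 (by simp)

def counterStrategyδ : St → Option Letter → Option Unit → Option (St × List Unit × Option Letter)
  | .q0, some .a, t => some (.q0, () :: t.toList, none)
  | .q0, some .b, some _ => some (.q1, [], none)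
  | .q1, some .b, some _ => some (.q1, [], none)
  | .q1, some .c, t => some (.q2, t.toList, none)
  | .q2, none, none => some (.q4, [], some .b)
  | .q2, none, some _ => some (.q3, [()], some .a)
  | .q4, some .c, t => some (.q3, () :: t.toList, none)
  | .q3, none, some _ => some (.q3, [()], some .d)
  | _, _, _ => none

def counterStrategy : StratPDA Letter Unit := ⟨St, .q0, counterStrategyδ⟩

def CounterInv : PDM.Conf St Unit → Prop
  | (.q3, []) => False
  | (.q4, _ :: _) => False
  | _ => True

theorem counterStrategy_det : counterStrategy.Det := by
  rintro (_ | _ | _ | _ | _) (_ | ⟨⟩) h (_ | _ | _ | _) <;>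
    simp_all [counterStrategy, counterStrategyδ]

theorem CounterInv.step {c c' : PDM.Conf St Unit} {x : Option Letter} {t' : St × List Unit}
    (hc : CounterInv c) (hs : gameM.Step c x c')
    (ht : counterStrategy.ConsStep gameOwner 0 c x c t') : t' = c' ∧ CounterInv c' := by
  obtain ⟨q, γ⟩ := c
  obtain ⟨q', γ'⟩ := c'
  obtain ⟨s', γs⟩ := t'
  cases q <;> rcases γ with _ | ⟨⟨⟩, γ⟩ <;> rcases x with _ | (_ | _ | _ | _) <;>
    simp_all [gameM_step_iff, StratPDA.ConsStep, StratPDA.TStep, counterStrategy,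
      counterStrategyδ, CounterInv, gameOwner, eq_comm]

theorem CounterInv.exists_move {c : PDM.Conf St Unit} (hc : CounterInv c)
    (hown : gameOwner c.1 = 0) :
    ∃ x c', gameM.Step c x c' ∧ counterStrategy.TStep c none x c' := by
  obtain ⟨q, _ | ⟨⟨⟩, γ⟩⟩ := c <;> cases q <;> simp [CounterInv, gameOwner] at hc hown
  · exact ⟨some b, (q4, []), gameM_step_iff.2 (by simp), rfl⟩
  · exact ⟨some a, (q3, () :: γ), gameM_step_iff.2 (by simp), [()], rfl, rfl⟩
  · exact ⟨some d, (q3, () :: γ), gameM_step_iff.2 (by simp), [()], rfl, rfl⟩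

theorem CounterInv.tStep_of_step {c c' : PDM.Conf St Unit} {x : Option Letter}
    (hc : CounterInv c) (hopp : gameOwner c.1 ≠ 0) (hs : gameM.Step c x c') :
    counterStrategy.TStep c x none c' := by
  obtain ⟨q, γ⟩ := c
  obtain ⟨q', γ'⟩ := c'
  cases q <;> rcases γ with _ | ⟨⟨⟩, γ⟩ <;> rcases x with _ | (_ | _ | _ | _) <;>
    simp_all [gameM_step_iff, StratPDA.TStep, counterStrategy, counterStrategyδ, CounterInv,
      gameOwner]

theorem CounterInv.next_eq_q3 {c c' : PDM.Conf St Unit} {x : Option Letter}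
    {t' : St × List Unit} (hc : CounterInv c) (hs : gameM.Step c x c')
    (ht : counterStrategy.ConsStep gameOwner 0 c x c t') (hq : c.1 = q3 ∨ c.1 = q4) :
    c'.1 = q3 := by
  obtain ⟨q, γ⟩ := c
  obtain ⟨s', γs⟩ := t'
  rcases hq with rfl | rfl <;> rcases γ with _ | ⟨⟨⟩, γ⟩ <;> rcases x with _ | (_ | _ | _ | _) <;>
    simp_all [gameM_step_iff, StratPDA.ConsStep, StratPDA.TStep, counterStrategy,
      counterStrategyδ, CounterInv, gameOwner]

theorem counterStrategy_reachable {c : PDM.Conf St Unit} {t : St × List Unit}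
    (h : counterStrategy.Reachable gameM gameOwner 0 c t) : t = c ∧ CounterInv c := by
  refine h.induction (P := fun c t => t = c ∧ CounterInv c) ⟨rfl, by simp [gameM, CounterInv]⟩ ?_
  rintro c x c' _ t' ⟨rfl, hc⟩ hs hcs
  exact hc.step hs hcs

theorem counterStrategy_nonBlocking : counterStrategy.NonBlocking gameM gameOwner 0 := by
  intro c t h
  obtain ⟨rfl, hc⟩ := counterStrategy_reachable h
  refine ⟨fun hown => ?_, fun hopp x c' hs => ⟨c', hc.tStep_of_step hopp hs⟩⟩
  obtain ⟨x, c', hs, ht⟩ := hc.exists_move hown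
  exact ⟨x, c', c', hs, ht⟩

theorem counterStrategy_parityAcc {conf : ℕ → PDM.Conf St Unit} {lab : ℕ → Option Letter}
    {τ : ℕ → St × List Unit} (hplay : gameM.IsPlay conf lab)
    (hcons : counterStrategy.Consistent gameM gameOwner 0 conf lab τ) :
    PDM.ParityAcc gameCol conf := by
  have hinv k := counterStrategy_reachable (StratPDA.reachable_of_consistent hplay hcons k)
  have hnext : ∀ k, (conf k).1 = q3 ∨ (conf k).1 = q4 → (conf (k + 1)).1 = q3 := fun k =>
    (hinv k).2.next_eq_q3 (hplay.2 k) ((hinv k).1 ▸ hcons.2 k)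
  have hq3 : ∀ k, (conf k).1 = q4 → ∀ j, (conf (k + 1 + j)).1 = q3 := by
    intro k hk j
    induction j with
    | zero => exact hnext k (Or.inr hk)
    | succ j ih => exact hnext _ (Or.inl ih)
  refine PDM.parityAcc_of_forall_even fun q hq => ?_
  cases q
  case q4 =>
    obtain ⟨k, -, hk⟩ := hq 0
    obtain ⟨m, hm, hm4⟩ := hq (k + 1)
    obtain ⟨j, rfl⟩ := Nat.exists_eq_add_of_le hm
    exact absurd (hm4.symm.trans (hq3 k hk j)) (by simp)
  all_goals decide

theorem counterStrategy_isWinningStrat :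
    counterStrategy.IsWinningStrat gameM gameOwner (PDM.ParityAcc gameCol) 0 :=
  StratPDA.isWinningStrat_iff.2 ⟨counterStrategy_det, counterStrategy_nonBlocking,
    fun _ _ _ hplay hcons => iff_of_true (counterStrategy_parityAcc hplay hcons) rfl⟩

section NoBlindStrategy

open StratPDA

variable {Γ' : Type}

theorem exists_reachable_q0 {T : StratPDA Letter Γ'} (hnb : T.NonBlocking gameM gameOwner 0)
    (γ : List Unit) : ∃ t, T.Reachable gameM gameOwner 0 (q0, γ) t := by
  induction γ with
  | nil => exact ⟨_, reachable_init⟩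
  | cons u γ ih =>
    obtain ⟨t, ht⟩ := ih
    obtain ⟨t', -, ht'⟩ := ht.exists_consStep_of_owner_ne hnb (by simp [gameOwner])
      (gameM_step_q0_a γ)
    exact ⟨t', ht'⟩

theorem not_reachable_q4 {T : StratPDA Letter Γ'}
    (hW : T.IsWinningStrat gameM gameOwner (PDM.ParityAcc gameCol) 0) {γ : List Unit}
    {t : T.S × List Γ'} (h : T.Reachable gameM gameOwner 0 (q4, () :: γ) t) : False := by
  obtain ⟨-, hnb, hwin⟩ := isWinningStrat_iff.1 hW
  obtain ⟨conf, lab, τ, n, hplay, hcons, htail⟩ := h.exists_consistent_play hnb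
    (tail := fun _ => (q4, () :: γ)) (tlab := fun _ => some d) rfl
    (fun _ => gameM_step_q4_d γ) (fun _ => by simp [gameOwner])
  have hpar := (hwin conf lab τ hplay hcons).2 rfl
  rw [PDM.parityAcc_iff_of_eventually_eq fun k => congrArg Prod.fst (htail k)] at hpar
  exact Nat.not_even_one hpar

theorem eq_some_b_of_reachable_q2_nil {T : StratPDA Letter Γ'}
    (hW : T.IsWinningStrat gameM gameOwner (PDM.ParityAcc gameCol) 0)
    {v v' : T.S × List Γ'} {x : Option Letter} {c' : PDM.Conf St Unit}
    (hv : T.Reachable gameM gameOwner 0 (q2, []) v) (hs : gameM.Step (q2, []) x c')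
    (hx : T.TStep v none x v') : x = some b := by
  have hnb := (isWinningStrat_iff.1 hW).2.1
  rcases (by simpa using gameM_step_iff.1 hs :
    x = some a ∧ c' = (q3, []) ∨ x = some b ∧ c' = (q4, [])) with ⟨rfl, rfl⟩ | ⟨rfl, -⟩
  · have hv' := hv.step hs ((consStep_of_owner_eq rfl).2 hx)
    obtain ⟨y, c'', v'', hs', hy⟩ := (hnb _ _ hv').1 rfl
    obtain ⟨-, rfl⟩ : y = some c ∧ c'' = (q4, [()]) := by simpa using gameM_step_iff.1 hs'
    exact (not_reachable_q4 hW (hv'.step hs' ((consStep_of_owner_eq rfl).2 hy))).elim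
  · rfl

variable {T : StratPDA Letter Unit}

theorem exists_reachable_q1_nil_of_append (hB : T.Blind)
    (hnb : T.NonBlocking gameM gameOwner 0) {γ δ p : List Unit} {t : T.S × List Unit}
    (h : T.Reachable gameM gameOwner 0 (q1, γ) t)
    (h₂ : T.Reachable gameM gameOwner 0 (q1, γ ++ δ) (t.1, t.2 ++ p)) :
    ∃ v, T.Reachable gameM gameOwner 0 (q1, []) v ∧
      T.Reachable gameM gameOwner 0 (q1, δ) (v.1, v.2 ++ p) := by
  induction γ generalizing t with
  | nil => exact ⟨t, h, h₂⟩
  | cons u γ ih =>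
    obtain ⟨t', ht', ht₂'⟩ := h.exists_step_append_of_blind hB hnb h₂ rfl
      (by simp [gameOwner]) (gameM_step_q1_b γ) (gameM_step_q1_b (γ ++ δ))
    exact ih ht' ht₂'

theorem not_isWinningStrat_of_blind [Finite T.S] (hB : T.Blind) :
    ¬ T.IsWinningStrat gameM gameOwner (PDM.ParityAcc gameCol) 0 := by
  intro hW
  have hnb := (isWinningStrat_iff.1 hW).2.1
  choose t ht using fun k => exists_reachable_q0 hnb (List.replicate (k + 1) ())
  obtain ⟨m, n, hmn, p, htp⟩ := exists_lt_eq_append_of_finite t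
  set γ := List.replicate m ()
  have hstack : List.replicate (n + 1) () = () :: (γ ++ () :: List.replicate (n - m - 1) ()) :=
    List.length_injective (by simp [γ]; omega)
  have h₂ : T.Reachable gameM gameOwner 0 (q0, () :: (γ ++ () :: List.replicate (n - m - 1) ()))
      ((t m).1, (t m).2 ++ p) := htp ▸ hstack ▸ ht n
  obtain ⟨u, hu, hu₂⟩ := (ht m).exists_step_append_of_blind hB hnb h₂ rfl
    (by simp [gameOwner]) (gameM_step_q0_b _) (gameM_step_q0_b _)
  obtain ⟨v, hv, hv₂⟩ := exists_reachable_q1_nil_of_append hB hnb hu hu₂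
  obtain ⟨w, hw, hw₂⟩ := hv.exists_step_append_of_blind hB hnb hv₂ rfl
    (by simp [gameOwner]) (gameM_step_q1_c _) (gameM_step_q1_c _)
  obtain ⟨x, c', w', hs, hx⟩ := (hnb _ _ hw).1 rfl
  obtain rfl := eq_some_b_of_reachable_q2_nil hW hw hs hx
  exact not_reachable_q4 hW (hw₂.step (gameM_step_q2_b _)
    ((consStep_of_owner_eq rfl).2 (hx.append_of_blind hB p)))

end NoBlindStrategy

/-- In the specific blind one-counter parity game `G(A)` above,
Player 0 has a winning strategy from the initial configuration `(q₀,⊥)` realizable by a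
deterministic pushdown automaton with output, but no deterministic blind one-counter
automaton with output realizes a winning strategy for Player 0. -/
theorem concrete_blind_game_dpda_strategy_but_no_blind_strategy :
    gameM.Deterministic ∧ gameM.Blind ∧
    (∃ (Γ' : Type) (_ : Finite Γ') (T : StratPDA Letter Γ'),
        Finite T.S ∧ T.IsWinningStrat gameM gameOwner (PDM.ParityAcc gameCol) 0) ∧
    ¬ ∃ T : StratPDA Letter Unit, Finite T.S ∧ T.Blind ∧
        T.IsWinningStrat gameM gameOwner (PDM.ParityAcc gameCol) 0 :=
  ⟨gameM_deterministic, gameM_blind,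
    ⟨Unit, inferInstance, counterStrategy, inferInstanceAs (Finite St),
      counterStrategy_isWinningStrat⟩,
    fun ⟨_, _, hB, hW⟩ => not_isWinningStrat_of_blind hB hW⟩
end
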